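/- With the 3-SAT construction of π_1, π_2 as described, the following are equivalent: (1) there exist natural numbers z_1, z_2 such that π_1^{z_1} π_2^{z_2} is fixpoint-free; (2) there exists a truth assignment σ : {x_1,…,x_n} → {0,1} under which every clause C_j contains a literal evaluating to 1. -/

import Mathlib

/-! 3-SAT construction.  Variables are `x_1, …, x_n`, indexed by `Fin n`; the `j`-th clause is
`C_j = {x̃_{idx j 0}, x̃_{idx j 1}, x̃_{idx j 2}}` with `idx j` strictly monotone, where the
literal on variable `idx j a` is negated iff `neg j a = true`.  The first `2n` primes are
`p_1, …, p_n, p̄_1, …, p̄_n` with `p_i = P (i-1)` and `p̄_i = P (n+i-1)` for the enumeration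
`P` of the primes (`P 0 = 2`).  Every `Sym(ℓ)`-component is realized on `Fin ℓ`, and the
`ℓ`-cycle `([ℓ]) = (1,2,…,ℓ)` is realized as `finRotate ℓ`.  Fixpoint-freeness is checked on
the disjoint union of all components. -/

namespace SatConstruction

/-- `P i` is the `(i+1)`-st prime: `P 0 = 2`, `P 1 = 3`, ….  The prime `p_i` associated with
the positive literal `x_i` is `P (i-1)` and the prime `p̄_i` associated with the negative
literal `x̄_i` is `P (n+i-1)` (with `i ∈ [n]` one-indexed). -/
noncomputable def P (i : ℕ) : ℕ := Nat.nth Nat.Prime i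

/-- `p̃` of a literal: the prime of the underlying variable, according to the sign. -/
noncomputable def ptil (n : ℕ) {m : ℕ} (idx : Fin m → Fin 3 → Fin n)
    (neg : Fin m → Fin 3 → Bool) (j : Fin m) (a : Fin 3) : ℕ :=
  if neg j a then P (n + (idx j a).val) else P (idx j a).val

/-- `r_j = p̃_{i_1} p̃_{i_2} p̃_{i_3}` for the clause `C_j`. -/
noncomputable def r (n : ℕ) {m : ℕ} (idx : Fin m → Fin 3 → Fin n)
    (neg : Fin m → Fin 3 → Bool) (j : Fin m) : ℕ :=
  ptil n idx neg j 0 * ptil n idx neg j 1 * ptil n idx neg j 2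

/-- The underlying set of the group
`G = ∏_{i=1}^n (Sym(p_i) × Sym(p̄_i) × Sym(p_i p̄_i)^{(p_i-1)(p̄_i-1)+1}) × ∏_{j=1}^m Sym(r_j)`
(embedded in a symmetric group).  The `(p_i-1)(p̄_i-1)+1` copies of `Sym(p_i p̄_i)` are
indexed by `Option (Fin (p_i - 1) × Fin (p̄_i - 1))`: `none` is the component of `α_{i,3}`
and `some (l-1, k-1)` is the component of `α_{i,l,k}`. -/
abbrev Omega (n : ℕ) {m : ℕ} (idx : Fin m → Fin 3 → Fin n)
    (neg : Fin m → Fin 3 → Bool) : Type :=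
  (Σ i : Fin n,
      (Fin (P i.val) ⊕ Fin (P (n + i.val))) ⊕
        (Σ _c : Option (Fin (P i.val - 1) × Fin (P (n + i.val) - 1)),
          Fin (P i.val * P (n + i.val)))) ⊕
    (Σ j : Fin m, Fin (r n idx neg j))

/-- `π_1 = (α_1,…,α_n,β_1,…,β_m)` with
`α_i = (α_{i,1}, α_{i,2}, α_{i,3}, α_{i,1,1}, …, α_{i,p_i-1,p̄_i-1})`,
`α_{i,1} = ([p_i])`, `α_{i,2} = ([p̄_i])`, `α_{i,3} = id`,
`α_{i,l,k} = ([p_i p̄_i])^{s_{i,l,k}}` and `β_j = id`. -/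
noncomputable def pi1 (n : ℕ) {m : ℕ} (idx : Fin m → Fin 3 → Fin n)
    (neg : Fin m → Fin 3 → Bool) (s : Fin n → ℕ → ℕ → ℕ) :
    Equiv.Perm (Omega n idx neg) :=
  Equiv.sumCongr
    (Equiv.sigmaCongrRight fun i =>
      Equiv.sumCongr
        (Equiv.sumCongr (finRotate _) (finRotate _))
        (Equiv.sigmaCongrRight fun c =>
          match c with
          | none => Equiv.refl _
          | some (l, k) =>
              finRotate (P i.val * P (n + i.val)) ^ s i (l.val + 1) (k.val + 1)))
    (Equiv.refl _)

/-- `π_2 = (γ_1,…,γ_n,δ_1,…,δ_m)` with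
`γ_i = (γ_{i,1}, γ_{i,2}, γ_{i,3}, γ_{i,1,1}, …, γ_{i,p_i-1,p̄_i-1})`,
`γ_{i,1} = γ_{i,2} = id`, `γ_{i,3} = γ_{i,l,k} = ([p_i p̄_i])` and `δ_j = ([r_j])`. -/
noncomputable def pi2 (n : ℕ) {m : ℕ} (idx : Fin m → Fin 3 → Fin n)
    (neg : Fin m → Fin 3 → Bool) :
    Equiv.Perm (Omega n idx neg) :=
  Equiv.sumCongr
    (Equiv.sigmaCongrRight fun _i =>
      Equiv.sumCongr (Equiv.refl _) (Equiv.sigmaCongrRight fun _c => finRotate _))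
    (Equiv.sigmaCongrRight fun j => finRotate (r n idx neg j))


/-! On every component, `π_1^{z_1} π_2^{z_2}` is a power of the full cycle, so it is
fixpoint-free iff no cycle length divides the corresponding exponent.  The components of
`α_{i,1}, α_{i,2}` force `p_i, p̄_i ∤ z_1`.  Given that, the variable gadget of `x_i` is
fixpoint-free iff exactly one of `p_i, p̄_i` divides `z_2`: if neither does, the Chinese
remainder theorem yields `(l, k)` with `p_i p̄_i ∣ s_{i,l,k} z_1 + z_2`; if both do, the
component of `α_{i,3}` has a fixpoint.  So `z_2` is divisible exactly by the primes of the
false literals of an assignment, and the component of `δ_j` is fixpoint-free iff `r_j ∤ z_2`,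
i.e. iff some literal of `C_j` is true.  Conversely, a satisfying assignment is realised by
`z_1 = 1` and `z_2` the product of the primes of its false literals. -/

open Equiv

def FixpointFree {α : Type*} (f : α → α) : Prop := ∀ a, f a ≠ a

section Perm

variable {α β : Type*}

theorem fixpointFree_sumCongr_iff (e : Perm α) (f : Perm β) :
    FixpointFree (sumCongr e f) ↔ FixpointFree e ∧ FixpointFree f := by
  simp [FixpointFree, Sum.forall]

theorem fixpointFree_sigmaCongrRight_iff {β : α → Type*} (F : ∀ a, Perm (β a)) :
    FixpointFree (sigmaCongrRight F) ↔ ∀ a, FixpointFree (F a) := by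
  simp [FixpointFree, Sigma.forall]

theorem sumCongr_pow (e : Perm α) (f : Perm β) (k : ℕ) :
    sumCongr e f ^ k = sumCongr (e ^ k) (f ^ k) :=
  (map_pow (Perm.sumCongrHom α β) (e, f) k).symm

theorem sigmaCongrRight_pow {β : α → Type*} (F : ∀ a, Perm (β a)) (k : ℕ) :
    sigmaCongrRight F ^ k = sigmaCongrRight fun a => F a ^ k :=
  (map_pow (Perm.sigmaCongrRightHom β) F k).symm

open Fin.NatCast in
theorem finRotate_pow_apply {N : ℕ} (t : ℕ) (x : Fin (N + 1)) :
    (finRotate (N + 1) ^ t) x = x + t := by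
  induction t with
  | zero => simp
  | succ t ih =>
    rw [pow_succ', Perm.mul_apply, ih, finRotate_apply]
    push_cast
    abel

theorem finRotate_pow_apply_eq_self_iff {N : ℕ} (t : ℕ) (x : Fin N) :
    (finRotate N ^ t) x = x ↔ N ∣ t := by
  obtain ⟨N, rfl⟩ : ∃ M, N = M + 1 := Nat.exists_eq_succ_of_ne_zero x.pos.ne'
  rw [finRotate_pow_apply, add_eq_left, Fin.natCast_eq_zero]

theorem fixpointFree_finRotate_pow_iff {N : ℕ} (hN : 0 < N) (t : ℕ) :
    FixpointFree (finRotate N ^ t) ↔ ¬ N ∣ t := by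
  simp only [FixpointFree, ne_eq, finRotate_pow_apply_eq_self_iff]
  exact ⟨fun h => h ⟨0, hN⟩, fun h _ => h⟩

end Perm

section Arithmetic

theorem exists_lt_dvd_mul_add {p z1 : ℕ} (hp : p.Prime) (h1 : ¬ p ∣ z1) (z2 : ℕ) :
    ∃ l < p, p ∣ l * z1 + z2 := by
  have := Fact.mk hp
  have hz1 : (z1 : ZMod p) ≠ 0 := by rwa [Ne, ZMod.natCast_eq_zero_iff]
  refine ⟨(-(z2 : ZMod p) / z1).val, ZMod.val_lt _, ?_⟩
  rw [← ZMod.natCast_eq_zero_iff]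
  push_cast
  rw [ZMod.natCast_zmod_val, div_mul_cancel₀ _ hz1, neg_add_cancel]

theorem dvd_mul_add_iff_of_mod_eq {p a l : ℕ} (h : a % p = l) (z1 z2 : ℕ) :
    p ∣ a * z1 + z2 ↔ p ∣ l * z1 + z2 := by
  subst h
  simp [Nat.dvd_iff_mod_eq_zero, Nat.add_mod, Nat.mul_mod]

theorem not_dvd_mul_add_of_dvd {p a z1 z2 : ℕ} (hp : p.Prime) (ha : ¬ p ∣ a) (h1 : ¬ p ∣ z1)
    (h2 : p ∣ z2) : ¬ p ∣ a * z1 + z2 := by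
  rw [Nat.dvd_add_left h2, hp.dvd_mul]
  tauto

/-- Exponent of `([p_i p̄_i])` in the component `c` of `π_1`: `0` for `α_{i,3}` and
`s_{i,l,k}` for `α_{i,l,k}`. -/
def shift (t : ℕ → ℕ → ℕ) {a b : ℕ} : Option (Fin a × Fin b) → ℕ
  | none => 0
  | some (l, k) => t (l + 1) (k + 1)

theorem forall_not_dvd_shift_mul_add_iff {p q z1 z2 : ℕ} (hp : p.Prime) (hq : q.Prime)
    (hpq : p ≠ q) (h1p : ¬ p ∣ z1) (h1q : ¬ q ∣ z1) {t : ℕ → ℕ → ℕ}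
    (ht : ∀ l k, 1 ≤ l → l < p → 1 ≤ k → k < q → t l k % p = l ∧ t l k % q = k) :
    (∀ c : Option (Fin (p - 1) × Fin (q - 1)), ¬ p * q ∣ shift t c * z1 + z2) ↔
      Xor (p ∣ z2) (q ∣ z2) := by
  have hcop : p.Coprime q := (Nat.coprime_primes hp hq).2 hpq
  have mul_dvd_iff (x : ℕ) : p * q ∣ x ↔ p ∣ x ∧ q ∣ x :=
    ⟨fun h => ⟨dvd_of_mul_right_dvd h, dvd_of_mul_left_dvd h⟩,
      fun h => hcop.mul_dvd_of_dvd_of_dvd h.1 h.2⟩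
  simp only [Option.forall, Prod.forall, shift, zero_mul, zero_add, mul_dvd_iff]
  constructor
  · rintro ⟨hboth, hsome⟩
    rw [xor_iff_iff_not]
    refine ⟨fun h2p h2q => hboth ⟨h2p, h2q⟩, fun h2q => ?_⟩
    by_contra h2p
    obtain ⟨l, hlp, hl⟩ := exists_lt_dvd_mul_add hp h1p z2
    obtain ⟨k, hkq, hk⟩ := exists_lt_dvd_mul_add hq h1q z2
    have hl0 : l ≠ 0 := by rintro rfl; exact h2p (by simpa using hl)
    have hk0 : k ≠ 0 := by rintro rfl; exact h2q (by simpa using hk)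
    obtain ⟨htp, htq⟩ := ht l k (by omega) hlp (by omega) hkq
    apply hsome ⟨l - 1, by omega⟩ ⟨k - 1, by omega⟩
    simp only [Nat.sub_add_cancel (Nat.one_le_iff_ne_zero.2 hl0),
      Nat.sub_add_cancel (Nat.one_le_iff_ne_zero.2 hk0)]
    exact ⟨(dvd_mul_add_iff_of_mod_eq htp z1 z2).2 hl, (dvd_mul_add_iff_of_mod_eq htq z1 z2).2 hk⟩
  · have ht' (l : Fin (p - 1)) (k : Fin (q - 1)) :
        ¬ p ∣ t (l + 1) (k + 1) ∧ ¬ q ∣ t (l + 1) (k + 1) := by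
      obtain ⟨htp, htq⟩ := ht (l + 1) (k + 1) (by omega) (by omega) (by omega) (by omega)
      rw [Nat.dvd_iff_mod_eq_zero, Nat.dvd_iff_mod_eq_zero, htp, htq]
      omega
    rintro (⟨h2p, h2q⟩ | ⟨h2q, h2p⟩)
    · exact ⟨fun h => h2q h.2,
        fun l k h => not_dvd_mul_add_of_dvd hp (ht' l k).1 h1p h2p h.1⟩
    · exact ⟨fun h => h2p h.1,
        fun l k h => not_dvd_mul_add_of_dvd hq (ht' l k).2 h1q h2q h.2⟩

end Arithmetic

theorem P_prime (t : ℕ) : (P t).Prime := Nat.prime_nth_prime t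

theorem P_injective : Function.Injective P := Nat.nth_injective Nat.infinite_setOfPred_prime

section Construction

/-- The primes `p_i, p̄_i` dividing `z` are exactly those of the literals that are false
under `σ`. -/
def Encodes (n : ℕ) (σ : Fin n → Bool) (z : ℕ) : Prop :=
  ∀ i : Fin n, (P i ∣ z ↔ σ i = false) ∧ (P (n + i) ∣ z ↔ σ i = true)

theorem exists_encodes_iff (n z : ℕ) :
    (∃ σ, Encodes n σ z) ↔ ∀ i : Fin n, Xor (P i ∣ z) (P (n + i) ∣ z) := by
  simp only [xor_iff_iff_not]
  constructor
  · rintro ⟨σ, hσ⟩ i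
    simp [(hσ i).1, (hσ i).2]
  · intro h
    exact ⟨fun i => !decide (P i ∣ z), fun i => by simp [h i]⟩

theorem encodes_prod (n : ℕ) (σ : Fin n → Bool) :
    Encodes n σ (∏ i, P (if σ i then n + i else i)) := by
  intro i
  simp only [(P_prime _).prime.dvd_finsetProd_iff, Nat.prime_dvd_prime_iff_eq (P_prime _)
    (P_prime _), P_injective.eq_iff, Finset.mem_univ, true_and]
  have := i.isLt
  constructor
  · constructor
    · rintro ⟨i', hi'⟩
      have := i'.isLt
      split_ifs at hi' with h
      · omega
      · rw [Fin.ext hi']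
        simpa using h
    · intro h
      exact ⟨i, by simp [h]⟩
  · constructor
    · rintro ⟨i', hi'⟩
      have := i'.isLt
      split_ifs at hi' with h
      · rwa [(Fin.ext (by omega) : i = i')]
      · omega
    · intro h
      exact ⟨i, by simp [h]⟩

variable {n m : ℕ} {idx : Fin m → Fin 3 → Fin n} {neg : Fin m → Fin 3 → Bool}

theorem ptil_prime (j : Fin m) (a : Fin 3) : (ptil n idx neg j a).Prime := by
  unfold ptil
  split <;> exact P_prime _

theorem ptil_injective {j : Fin m} (hj : Function.Injective (idx j)) :
    Function.Injective (ptil n idx neg j) := by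
  intro a b h
  apply hj (Fin.ext _)
  have := (idx j a).isLt
  have := (idx j b).isLt
  unfold ptil at h
  split at h <;> split at h <;> have := P_injective h <;> omega

theorem r_pos (j : Fin m) : 0 < r n idx neg j := by
  simp only [r, CanonicallyOrderedAdd.mul_pos, (ptil_prime j _).pos, and_self]

theorem r_dvd_iff {j : Fin m} (hj : Function.Injective (idx j)) (z : ℕ) :
    r n idx neg j ∣ z ↔ ∀ a, ptil n idx neg j a ∣ z := by
  rw [r, ← Fin.prod_univ_three]
  refine ⟨fun h a => (Finset.dvd_prod_of_mem _ (Finset.mem_univ a)).trans h,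
    Fintype.prod_dvd_of_isRelPrime fun a b hab => ?_⟩
  exact Nat.coprime_iff_isRelPrime.1 <|
    (Nat.coprime_primes (ptil_prime j a) (ptil_prime j b)).2 ((ptil_injective hj).ne hab)

theorem pi1_pow_mul_pi2_pow (s : Fin n → ℕ → ℕ → ℕ) (z1 z2 : ℕ) :
    pi1 n idx neg s ^ z1 * pi2 n idx neg ^ z2 =
      sumCongr
        (sigmaCongrRight fun i =>
          sumCongr (sumCongr (finRotate _ ^ z1) (finRotate _ ^ z1))
            (sigmaCongrRight fun c => finRotate _ ^ (shift (s i) c * z1 + z2)))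
        (sigmaCongrRight fun j => finRotate (r n idx neg j) ^ z2) := by
  simp only [pi1, pi2, sumCongr_pow, sigmaCongrRight_pow, ← Perm.one_def, one_pow,
    Perm.sumCongr_mul, Perm.sigmaCongrRight_mul, one_mul]
  congr 2
  funext i
  simp only [Pi.mul_apply, Perm.sumCongr_mul, Perm.sigmaCongrRight_mul, mul_one]
  congr 2
  funext c
  rcases c with _ | ⟨l, k⟩ <;> simp [shift, pow_add, pow_mul]

theorem fixpointFree_pi1_pow_mul_pi2_pow_iff {s : Fin n → ℕ → ℕ → ℕ}
    (hs : ∀ i : Fin n, ∀ l k : ℕ, 1 ≤ l → l < P i → 1 ≤ k → k < P (n + i) →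
      s i l k % P i = l ∧ s i l k % P (n + i) = k) (z1 z2 : ℕ) :
    FixpointFree (pi1 n idx neg s ^ z1 * pi2 n idx neg ^ z2) ↔
      (∀ i : Fin n, ¬ P i ∣ z1 ∧ ¬ P (n + i) ∣ z1 ∧ Xor (P i ∣ z2) (P (n + i) ∣ z2)) ∧
        ∀ j, ¬ r n idx neg j ∣ z2 := by
  have hpos (t : ℕ) : 0 < P t := (P_prime t).pos
  simp only [pi1_pow_mul_pi2_pow, fixpointFree_sumCongr_iff, fixpointFree_sigmaCongrRight_iff,
    fixpointFree_finRotate_pow_iff, hpos, r_pos, CanonicallyOrderedAdd.mul_pos, and_self,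
    and_assoc]
  refine and_congr_left fun _ => forall_congr' fun i => and_congr_right fun h1p =>
    and_congr_right fun h1q => ?_
  exact forall_not_dvd_shift_mul_add_iff (P_prime _) (P_prime _)
    (P_injective.ne (by omega)) h1p h1q (hs i)

theorem Encodes.ptil_dvd_iff {σ : Fin n → Bool} {z : ℕ} (hσ : Encodes n σ z) (j : Fin m)
    (a : Fin 3) :
    ptil n idx neg j a ∣ z ↔ (if neg j a then !σ (idx j a) else σ (idx j a)) = false := by
  unfold ptil
  cases neg j a <;> simp [hσ (idx j a)]

theorem Encodes.clause_satisfied_iff {σ : Fin n → Bool} {z : ℕ} (hσ : Encodes n σ z)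
    {j : Fin m} (hj : Function.Injective (idx j)) :
    (∃ a, (if neg j a then !σ (idx j a) else σ (idx j a)) = true) ↔ ¬ r n idx neg j ∣ z := by
  simp only [r_dvd_iff hj, hσ.ptil_dvd_iff, not_forall, Bool.not_eq_false]

end Construction

/-- There are `z_1, z_2` such that `π_1^{z_1} π_2^{z_2}` is fixpoint-free if and only if
there is a truth assignment `σ` under which every clause contains a literal evaluating
to `1` (`true`). -/
theorem fixpointFree_iff_satisfiable
    (n m : ℕ) (idx : Fin m → Fin 3 → Fin n) (hidx : ∀ j, StrictMono (idx j))
    (neg : Fin m → Fin 3 → Bool)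
    (s : Fin n → ℕ → ℕ → ℕ)
    -- `s_{i,l,k}` is the unique number in `[0, p_i p̄_i - 1]` with `s_{i,l,k} ≡ l (mod p_i)`
    -- and `s_{i,l,k} ≡ k (mod p̄_i)`, for `l ∈ [p_i - 1]` and `k ∈ [p̄_i - 1]`
    (hs : ∀ i : Fin n, ∀ l k : ℕ, 1 ≤ l → l < P i.val → 1 ≤ k → k < P (n + i.val) →
      s i l k < P i.val * P (n + i.val) ∧
        s i l k % P i.val = l ∧ s i l k % P (n + i.val) = k)
    :
    (∃ z1 z2 : ℕ, ∀ a : Omega n idx neg,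
        (pi1 n idx neg s ^ z1 * pi2 n idx neg ^ z2) a ≠ a) ↔
      ∃ σ : Fin n → Bool, ∀ j : Fin m, ∃ a : Fin 3,
        (if neg j a then !σ (idx j a) else σ (idx j a)) = true := by
  have hfree := fixpointFree_pi1_pow_mul_pi2_pow_iff (idx := idx) (neg := neg)
    fun i l k h1 h2 h3 h4 => (hs i l k h1 h2 h3 h4).2
  constructor
  · rintro ⟨z1, z2, h⟩
    obtain ⟨hvar, hclause⟩ := (hfree z1 z2).1 h
    obtain ⟨σ, hσ⟩ := (exists_encodes_iff n z2).2 fun i => (hvar i).2.2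
    exact ⟨σ, fun j => (hσ.clause_satisfied_iff (hidx j).injective).2 (hclause j)⟩
  · rintro ⟨σ, hσ⟩
    have henc := encodes_prod n σ
    refine ⟨1, _, (hfree 1 _).2 ⟨fun i => ⟨(P_prime _).not_dvd_one, (P_prime _).not_dvd_one,
      (exists_encodes_iff n _).1 ⟨σ, henc⟩ i⟩,
      fun j => (henc.clause_satisfied_iff (hidx j).injective).1 (hσ j)⟩⟩

end SatConstruction
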